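/- Let p, ν ∈ ℕ with ν ≥ p, and let a : (−1,1) → ℝ be a twice-differentiable solution of the master ODE (1−τ²)·a″(τ) + 2(p−1)·τ·a′(τ) + (ν(ν+1) − p(p−1))·a(τ) = 0. Then a extends to a C^∞ function on an open interval containing [−1,1] (i.e. is regular at τ = ±1) if and only if the following initial-data conditions at τ = 0 hold: a(0) = 0 when ν + p is odd, and a′(0) = 0 when ν + p is even. -/

import Mathlib

open Polynomial Set Metric

namespace Stmt6

lemma natlt (m : ℕ) : (m : WithTop ℕ∞) < ((⊤:ℕ∞) : WithTop ℕ∞) := by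
  exact_mod_cast lt_top_iff_ne_top.mpr (by simp)



noncomputable def bc (p ν : ℕ) : ℕ → ℝ
  | 0 => if (ν + p) % 2 = 0 then 1 else 0
  | 1 => if (ν + p) % 2 = 0 then 0 else 1
  | (k+2) => ((((k:ℝ))-p)*(((k:ℝ))-p+1) - ν*(ν+1)) / (((k:ℝ)+2)*((k:ℝ)+1)) * bc p ν k

lemma bc_rec (p ν k : ℕ) :
    ((k:ℝ)+2)*((k:ℝ)+1) * bc p ν (k+2)
      = (((k:ℝ)-p)*(((k:ℝ))-p+1) - ν*(ν+1)) * bc p ν k := by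
  have h : ((k:ℝ)+2)*((k:ℝ)+1) ≠ 0 := by positivity
  rw [bc]
  field_simp

lemma bc_parity (p ν : ℕ) : ∀ k, k % 2 ≠ (ν + p) % 2 → bc p ν k = 0 := by
  intro k
  induction k using Nat.strong_induction_on with
  | _ k ih =>
    match k with
    | 0 => intro h; rw [bc]; simp only [Nat.zero_mod] at h; rw [if_neg (fun hh => h hh.symm)]
    | 1 => intro h; rw [bc]
           have : (ν + p) % 2 = 0 := by omega
           rw [if_pos this]
    | (k+2) => intro h
               rw [bc, ih k (by omega) (by omega), mul_zero]

lemma bc_vanish (p ν : ℕ) : ∀ k, ν + p < k → bc p ν k = 0 := by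
  intro k
  induction k using Nat.strong_induction_on with
  | _ k ih =>
    intro hk
    by_cases hpar : k % 2 ≠ (ν + p) % 2
    · exact bc_parity p ν k hpar
    · push_neg at hpar
      -- k ≡ ν+p mod 2 and k > ν+p so k ≥ ν+p+2 ≥ 2
      have hk2 : ν + p + 2 ≤ k := by omega
      obtain ⟨m, rfl⟩ : ∃ m, k = m + 2 := ⟨k - 2, by omega⟩
      rcases eq_or_lt_of_le (by omega : ν + p ≤ m) with hm | hm
      · -- m = ν + p : the factor vanishes
        rw [bc]
        have : ((m:ℝ)-p)*(((m:ℝ))-p+1) - ν*(ν+1) = 0 := by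
          rw [← hm]; push_cast; ring
        rw [this]; simp
      · rw [bc, ih m (by omega) hm, mul_zero]

noncomputable def Qpoly (p ν : ℕ) : Polynomial ℝ :=
  ∑ k ∈ Finset.range (ν + p + 1), Polynomial.monomial k (bc p ν k)

lemma Qpoly_coeff (p ν : ℕ) (n : ℕ) : (Qpoly p ν).coeff n = bc p ν n := by
  rw [Qpoly, Polynomial.finset_sum_coeff]
  simp only [Polynomial.coeff_monomial]
  by_cases hn : n < ν + p + 1
  · rw [Finset.sum_eq_single n]
    · simp
    · intro b _ hb; rw [if_neg hb]
    · intro h; exact absurd (Finset.mem_range.mpr hn) h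
  · rw [Finset.sum_eq_zero, bc_vanish p ν n (by omega)]
    intro b hb
    rw [if_neg]
    intro h; subst h; exact hn (Finset.mem_range.mp hb)

lemma Qpoly_ode (p ν : ℕ) :
    derivative (derivative (Qpoly p ν))
      - derivative (derivative (Qpoly p ν)) * X ^ 2
      + C (2*((p:ℝ)-1)) * (derivative (Qpoly p ν) * X ^ 1)
      + C ((ν:ℝ)*((ν:ℝ)+1) - (p:ℝ)*((p:ℝ)-1)) * Qpoly p ν = 0 := by
  ext n
  simp only [coeff_add, coeff_sub, coeff_mul_X_pow', coeff_C_mul, coeff_derivative,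
    Qpoly_coeff, coeff_zero]
  match n with
  | 0 =>
    simp only [show ¬ (2 ≤ 0) by omega, show ¬ (1 ≤ 0) by omega, if_neg, if_false]
    push_cast
    linear_combination bc_rec p ν 0
  | 1 =>
    simp only [show ¬ (2 ≤ 1) by omega, show (1:ℕ) ≤ 1 from le_refl 1, if_false, if_true]
    push_cast
    linear_combination bc_rec p ν 1
  | (m+2) =>
    simp only [show (2:ℕ) ≤ m + 2 by omega, show (1:ℕ) ≤ m + 2 by omega, if_true]
    simp only [coeff_derivative, Qpoly_coeff, show m + 2 - 2 = m from rfl,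
      show m + 2 - 1 = m + 1 from rfl, show m + 2 + 1 + 1 = m + 4 from rfl,
      show m + 1 + 1 = m + 2 from rfl]
    have hrec := bc_rec p ν (m+2)
    simp only [show m + 2 + 2 = m + 4 from rfl] at hrec
    push_cast at hrec ⊢
    linear_combination hrec
noncomputable def Pf (p ν : ℕ) : ℝ → ℝ := fun τ => (Qpoly p ν).eval τ

lemma Pf_contDiff (p ν : ℕ) : ContDiff ℝ (⊤ : WithTop ℕ∞) (Pf p ν) := by
  rw [contDiff_omega_iff_analyticOnNhd]
  exact AnalyticOnNhd.eval_polynomial (𝕜 := ℝ) _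

lemma deriv_Pf (p ν : ℕ) : deriv (Pf p ν) = fun τ => (derivative (Qpoly p ν)).eval τ :=
  funext fun τ => Polynomial.deriv (p := Qpoly p ν) (x := τ)

lemma deriv2_Pf (p ν : ℕ) :
    deriv (deriv (Pf p ν)) = fun τ => (derivative (derivative (Qpoly p ν))).eval τ := by
  rw [deriv_Pf]; exact funext fun τ => Polynomial.deriv (p := derivative (Qpoly p ν)) (x := τ)

lemma Pf_ode (p ν : ℕ) (τ : ℝ) :
    (1 - τ^2) * deriv (deriv (Pf p ν)) τ + 2*((p:ℝ)-1)*τ* deriv (Pf p ν) τ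
      + ((ν:ℝ)*((ν:ℝ)+1) - (p:ℝ)*((p:ℝ)-1)) * Pf p ν τ = 0 := by
  have h := congrArg (fun q => Polynomial.eval τ q) (Qpoly_ode p ν)
  simp only [eval_add, eval_sub, eval_mul, eval_pow, eval_C, eval_X, eval_zero] at h
  rw [deriv2_Pf, deriv_Pf]
  simp only [Pf]
  linear_combination h

lemma Pf_zero (p ν : ℕ) : Pf p ν 0 = bc p ν 0 := by
  rw [Pf, ← Polynomial.coeff_zero_eq_eval_zero, Qpoly_coeff]

lemma deriv_Pf_zero (p ν : ℕ) : deriv (Pf p ν) 0 = bc p ν 1 := by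
  rw [deriv_Pf]
  simp only [← Polynomial.coeff_zero_eq_eval_zero, coeff_derivative, Qpoly_coeff]
  norm_num

lemma ode_unique (p ν : ℕ) (f g : ℝ → ℝ)
    (hf : ∀ τ ∈ Ioo (-1:ℝ) 1, DifferentiableAt ℝ f τ ∧ DifferentiableAt ℝ (deriv f) τ)
    (hfo : ∀ τ ∈ Ioo (-1:ℝ) 1,
      (1 - τ ^ 2) * deriv (deriv f) τ + 2 * ((p : ℝ) - 1) * τ * deriv f τ
        + ((ν : ℝ) * ((ν : ℝ) + 1) - (p : ℝ) * ((p : ℝ) - 1)) * f τ = 0)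
    (hg : ∀ τ ∈ Ioo (-1:ℝ) 1, DifferentiableAt ℝ g τ ∧ DifferentiableAt ℝ (deriv g) τ)
    (hgo : ∀ τ ∈ Ioo (-1:ℝ) 1,
      (1 - τ ^ 2) * deriv (deriv g) τ + 2 * ((p : ℝ) - 1) * τ * deriv g τ
        + ((ν : ℝ) * ((ν : ℝ) + 1) - (p : ℝ) * ((p : ℝ) - 1)) * g τ = 0)
    (h0 : f 0 = g 0) (h1 : deriv f 0 = deriv g 0) :
    EqOn f g (Ioo (-1:ℝ) 1) := by
  set μ : ℝ := (ν : ℝ) * ((ν : ℝ) + 1) - (p : ℝ) * ((p : ℝ) - 1) with hμ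
  intro τ hτ
  have hτ1 : |τ| < 1 := abs_lt.mpr ⟨hτ.1, hτ.2⟩
  set r : ℝ := (1 + |τ|) / 2 with hrdef
  have hr0 : 0 < r := by positivity
  have hr1 : r < 1 := by rw [hrdef]; linarith
  have hτr : |τ| < r := by rw [hrdef]; linarith
  have hrsub : Ioo (-r) r ⊆ Ioo (-1:ℝ) 1 := Ioo_subset_Ioo (by linarith) (by linarith)
  have hden : (0:ℝ) < 1 - r^2 := by nlinarith
  set cl : ℝ → ℝ := fun t => max (-r) (min r t) with hcl
  have hclabs : ∀ t, |cl t| ≤ r := by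
    intro t
    rw [abs_le]
    exact ⟨le_max_left _ _, max_le (by linarith) (min_le_left _ _)⟩
  have hcleq : ∀ t ∈ Ioo (-r) r, cl t = t := by
    intro t ht
    rw [hcl]
    simp only
    rw [min_eq_right ht.2.le, max_eq_right ht.1.le]
  have hdenc : ∀ t, (0:ℝ) < 1 - (cl t)^2 ∧ 1 - r^2 ≤ 1 - (cl t)^2 := by
    intro t
    have h1 := hclabs t
    have h2 : (cl t)^2 ≤ r^2 := by
      obtain ⟨ha, hb⟩ := abs_le.mp h1
      nlinarith
    exact ⟨by nlinarith, by linarith⟩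
  set K' : ℝ := 1 + (2*((p:ℝ)+1)*r + |μ|)/(1 - r^2) with hK'
  have hK'1 : 1 ≤ K' := by
    rw [hK']
    have : 0 ≤ (2*((p:ℝ)+1)*r + |μ|)/(1 - r^2) := by positivity
    linarith
  set v : ℝ → ℝ × ℝ → ℝ × ℝ := fun t x =>
    (x.2, (-(2*((p:ℝ)-1)*(cl t)*x.2) - μ*x.1)/(1-(cl t)^2)) with hv
  have hlip : ∀ t, LipschitzOnWith (Real.toNNReal K') (v t) univ := by
    intro t
    apply LipschitzOnWith.of_dist_le_mul
    intro x _ y _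
    rw [Real.coe_toNNReal _ (by linarith : (0:ℝ) ≤ K')]
    simp only [Prod.dist_eq, Real.dist_eq, hv]
    set D := max |x.1 - y.1| |x.2 - y.2| with hD
    have hD0 : 0 ≤ D := le_trans (abs_nonneg _) (le_max_left _ _)
    have hD1 : |x.1 - y.1| ≤ D := le_max_left _ _
    have hD2 : |x.2 - y.2| ≤ D := le_max_right _ _
    apply max_le
    · calc |x.2 - y.2| ≤ D := hD2
        _ ≤ K' * D := le_mul_of_one_le_left hD0 hK'1
    · have hnum : |(-(2*((p:ℝ)-1)*(cl t)*x.2) - μ*x.1) - ((-(2*((p:ℝ)-1)*(cl t)*y.2) - μ*y.1))|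
          ≤ (2*((p:ℝ)+1)*r + |μ|) * D := by
        have e1 : (-(2*((p:ℝ)-1)*(cl t)*x.2) - μ*x.1) - ((-(2*((p:ℝ)-1)*(cl t)*y.2) - μ*y.1))
            = -(2*((p:ℝ)-1)*(cl t))*(x.2 - y.2) - μ*(x.1 - y.1) := by ring
        rw [e1]
        calc |(-(2*((p:ℝ)-1)*(cl t)))*(x.2 - y.2) - μ*(x.1 - y.1)|
            ≤ |(-(2*((p:ℝ)-1)*(cl t)))*(x.2 - y.2)| + |μ*(x.1 - y.1)| := abs_sub _ _
          _ = |2*((p:ℝ)-1)*(cl t)| * |x.2 - y.2| + |μ| * |x.1 - y.1| := by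
              rw [abs_mul, abs_mul, abs_neg]
          _ ≤ (2*((p:ℝ)+1)*r) * D + |μ| * D := by
              apply add_le_add
              · apply mul_le_mul _ hD2 (abs_nonneg _) (by positivity)
                rw [abs_mul]
                apply mul_le_mul _ (hclabs t) (abs_nonneg _) (by positivity)
                rw [abs_mul]
                simp only [abs_two]
                apply mul_le_mul_of_nonneg_left _ (by norm_num : (0:ℝ) ≤ 2)
                rw [abs_le]
                constructor
                · have := Nat.cast_nonneg (α := ℝ) p; linarith
                · have := Nat.cast_nonneg (α := ℝ) p; linarith [abs_nonneg ((p:ℝ)-1)]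
              · exact mul_le_mul_of_nonneg_left hD1 (abs_nonneg μ)
          _ = (2*((p:ℝ)+1)*r + |μ|) * D := by ring
      have hd := hdenc t
      calc |(-(2*((p:ℝ)-1)*(cl t)*x.2) - μ*x.1)/(1-(cl t)^2)
              - (-(2*((p:ℝ)-1)*(cl t)*y.2) - μ*y.1)/(1-(cl t)^2)|
          = |((-(2*((p:ℝ)-1)*(cl t)*x.2) - μ*x.1) - ((-(2*((p:ℝ)-1)*(cl t)*y.2) - μ*y.1)))|
              / |1-(cl t)^2| := by rw [← abs_div]; ring_nf
        _ ≤ ((2*((p:ℝ)+1)*r + |μ|) * D) / (1 - r^2) := by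
            rw [abs_of_pos hd.1]
            apply div_le_div₀ (by positivity) hnum hden hd.2
        _ = ((2*((p:ℝ)+1)*r + |μ|)/(1 - r^2)) * D := by ring
        _ ≤ K' * D := by
            apply mul_le_mul_of_nonneg_right _ hD0
            rw [hK']
            linarith
  have hder : ∀ (h : ℝ → ℝ),
      (∀ σ ∈ Ioo (-1:ℝ) 1, DifferentiableAt ℝ h σ ∧ DifferentiableAt ℝ (deriv h) σ) →
      (∀ σ ∈ Ioo (-1:ℝ) 1,
        (1 - σ ^ 2) * deriv (deriv h) σ + 2 * ((p : ℝ) - 1) * σ * deriv h σ + μ * h σ = 0) →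
      ∀ s ∈ Ioo (-r) r, HasDerivAt (fun t => (h t, deriv h t)) (v s (h s, deriv h s)) s
        ∧ (h s, deriv h s) ∈ univ := by
    intro h hh hho s hs
    refine ⟨?_, trivial⟩
    have hs1 : s ∈ Ioo (-1:ℝ) 1 := hrsub hs
    have hd1 : HasDerivAt h (deriv h s) s := (hh s hs1).1.hasDerivAt
    have hd2 : HasDerivAt (deriv h) (deriv (deriv h) s) s := (hh s hs1).2.hasDerivAt
    have hval : v s (h s, deriv h s) = (deriv h s, deriv (deriv h) s) := by
      rw [hv]
      simp only
      rw [hcleq s hs]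
      have hne : (1 : ℝ) - s^2 ≠ 0 := by nlinarith [hs1.1, hs1.2]
      have hoo := hho s hs1
      rw [Prod.ext_iff]
      refine ⟨rfl, ?_⟩
      simp only
      field_simp
      linear_combination -hoo
    rw [hval]
    exact hd1.prodMk hd2
  have key := ODE_solution_unique_of_mem_Ioo (E := ℝ × ℝ) (v := v) (s := fun _ => univ)
      (K := Real.toNNReal K') (f := fun t => (f t, deriv f t)) (g := fun t => (g t, deriv g t))
      (t₀ := (0:ℝ)) (a := -r) (b := r) (fun t _ => hlip t) ⟨neg_lt_zero.mpr hr0, hr0⟩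
      (hder f hf hfo) (hder g hg hgo) (by rw [Prod.ext_iff]; exact ⟨h0, h1⟩)
  have hmem : τ ∈ Ioo (-r) r := by
    obtain ⟨hl, hr'⟩ := abs_lt.mp hτr
    exact ⟨hl, hr'⟩
  have := key hmem
  exact congrArg Prod.fst this


noncomputable def Ef (p ν : ℕ) (G : ℝ → ℝ) (k : ℕ) : ℝ → ℝ := fun τ =>
  (1 - τ^2) * iteratedDeriv (k+2) G τ + (2*((p:ℝ)-1-k))*τ * iteratedDeriv (k+1) G τ
    + ((ν:ℝ)*((ν:ℝ)+1) - ((p:ℝ)-k)*((p:ℝ)-k-1)) * iteratedDeriv k G τ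

variable {p ν : ℕ} {G : ℝ → ℝ}

lemma hD_hasDeriv (hG : ContDiff ℝ (⊤ : ℕ∞) G) (j : ℕ) (x : ℝ) :
    HasDerivAt (iteratedDeriv j G) (iteratedDeriv (j+1) G x) x := by
  rw [iteratedDeriv_succ]
  exact ((hG.differentiable_iteratedDeriv j (by exact_mod_cast lt_top_iff_ne_top.mpr (by simp))) x).hasDerivAt

lemma Ef_hasDeriv (hG : ContDiff ℝ (⊤ : ℕ∞) G) (k : ℕ) (x : ℝ) :
    HasDerivAt (Ef p ν G k) (Ef p ν G (k+1) x) x := by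
  have h1 : HasDerivAt (fun τ : ℝ => 1 - τ^2) (-(2*x)) x := by
    have := (hasDerivAt_pow 2 x).const_sub 1
    refine this.congr_deriv ?_
    norm_num
  have hprod1 := h1.mul (hD_hasDeriv hG (k+2) x)
  have h2 : HasDerivAt (fun τ : ℝ => (2*((p:ℝ)-1-k))*τ) (2*((p:ℝ)-1-k)) x := by
    simpa using (hasDerivAt_id x).const_mul (2*((p:ℝ)-1-k))
  have hprod2 := h2.mul (hD_hasDeriv hG (k+1) x)
  have hprod3 := (hD_hasDeriv hG k x).const_mul ((ν:ℝ)*((ν:ℝ)+1) - ((p:ℝ)-k)*((p:ℝ)-k-1))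
  have htot := (hprod1.add hprod2).add hprod3
  refine htot.congr_deriv ?_
  simp only [Ef]
  rw [show k+1+2 = k+2+1 from rfl, show k+1+1 = k+2 from rfl]
  push_cast
  ring

lemma Ef_zero_on (hG : ContDiff ℝ (⊤ : ℕ∞) G)
    (hode : ∀ τ ∈ Ioo (-1:ℝ) 1,
      (1 - τ ^ 2) * deriv (deriv G) τ + 2 * ((p : ℝ) - 1) * τ * deriv G τ
        + ((ν : ℝ) * ((ν : ℝ) + 1) - (p : ℝ) * ((p : ℝ) - 1)) * G τ = 0) :
    ∀ k, ∀ τ ∈ Ioo (-1:ℝ) 1, Ef p ν G k τ = 0 := by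
  intro k
  induction k with
  | zero =>
    intro τ hτ
    have h := hode τ hτ
    simp only [Ef]
    rw [show (0:ℕ)+2 = 1+1 from rfl, iteratedDeriv_succ, iteratedDeriv_one, iteratedDeriv_zero]
    push_cast
    linear_combination h
  | succ k ih =>
    intro τ hτ
    have h1 : deriv (Ef p ν G k) τ = Ef p ν G (k+1) τ := (Ef_hasDeriv hG k τ).deriv
    have h2 : Ef p ν G k =ᶠ[nhds τ] (fun _ => (0:ℝ)) :=
      Filter.eventually_of_mem (Ioo_mem_nhds hτ.1 hτ.2) (ih · ·)
    rw [← h1, h2.deriv_eq, deriv_const]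

lemma Ef_at_one (hG : ContDiff ℝ (⊤ : ℕ∞) G)
    (hode : ∀ τ ∈ Ioo (-1:ℝ) 1,
      (1 - τ ^ 2) * deriv (deriv G) τ + 2 * ((p : ℝ) - 1) * τ * deriv G τ
        + ((ν : ℝ) * ((ν : ℝ) + 1) - (p : ℝ) * ((p : ℝ) - 1)) * G τ = 0)
    (k : ℕ) : Ef p ν G k 1 = 0 := by
  have hcont : Continuous (Ef p ν G k) := by
    have hc : ∀ j, Continuous (iteratedDeriv j G) := fun j =>
      (hG.differentiable_iteratedDeriv j
        (by exact_mod_cast lt_top_iff_ne_top.mpr (by simp))).continuous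
    unfold Ef
    fun_prop
  have heq : EqOn (Ef p ν G k) (fun _ => (0:ℝ)) (Icc (-1:ℝ) 1) := by
    rw [← closure_Ioo (by norm_num : (-1:ℝ) ≠ 1)]
    exact Set.EqOn.closure (fun τ hτ => Ef_zero_on hG hode k τ hτ) hcont continuous_const
  exact heq (by norm_num : (1:ℝ) ∈ Icc (-1:ℝ) 1)

lemma boundary_vanish (hG : ContDiff ℝ (⊤ : ℕ∞) G) (hp : 1 ≤ p) (hνp : p ≤ ν)
    (hode : ∀ τ ∈ Ioo (-1:ℝ) 1,
      (1 - τ ^ 2) * deriv (deriv G) τ + 2 * ((p : ℝ) - 1) * τ * deriv G τ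
        + ((ν : ℝ) * ((ν : ℝ) + 1) - (p : ℝ) * ((p : ℝ) - 1)) * G τ = 0) :
    ∀ k, k < p → iteratedDeriv k G 1 = 0 := by
  have hrel : ∀ k, 2*((p:ℝ)-1-k) * iteratedDeriv (k+1) G 1
      + ((ν:ℝ)*((ν:ℝ)+1) - ((p:ℝ)-k)*((p:ℝ)-k-1)) * iteratedDeriv k G 1 = 0 := by
    intro k
    have h := Ef_at_one hG hode k
    simp only [Ef] at h
    linear_combination h
  have hν1 : (1:ℝ) ≤ (ν:ℝ) := by exact_mod_cast le_trans hp hνp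
  have claim : ∀ j k, k + j + 1 = p → iteratedDeriv k G 1 = 0 := by
    intro j
    induction j with
    | zero =>
      intro k hk
      have hpc : (p:ℝ) = (k:ℝ)+1 := by rw [← hk]; push_cast; ring
      have h2 := hrel k
      rw [hpc] at h2
      have h3 : ((ν:ℝ)*((ν:ℝ)+1)) * iteratedDeriv k G 1 = 0 := by linear_combination h2
      have h4 : ((ν:ℝ)*((ν:ℝ)+1)) ≠ 0 := by nlinarith
      exact (mul_eq_zero.mp h3).resolve_left h4
    | succ j ih =>
      intro k hk
      have hD1 : iteratedDeriv (k+1) G 1 = 0 := ih (k+1) (by omega)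
      have h2 := hrel k
      rw [hD1, mul_zero, zero_add] at h2
      have hpc : (p:ℝ) = (k:ℝ) + (j:ℝ) + 2 := by
        rw [show p = k + (j+1) + 1 from hk.symm]; push_cast; ring
      rw [hpc] at h2
      have hjν : (j:ℝ) + 2 ≤ (ν:ℝ) := by
        have : j + 2 ≤ ν := by omega
        exact_mod_cast this
      have h4 : ((ν:ℝ)*((ν:ℝ)+1) - ((k:ℝ)+(j:ℝ)+2-(k:ℝ))*((k:ℝ)+(j:ℝ)+2-(k:ℝ)-1)) ≠ 0 := by
        have hj0 : (0:ℝ) ≤ (j:ℝ) := Nat.cast_nonneg j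
        nlinarith
      exact (mul_eq_zero.mp h2).resolve_left h4
  intro k hk
  exact claim (p - k - 1) k (by omega)


lemma decay_step (f : ℝ → ℝ) (hf : Differentiable ℝ f) (h1 : f 1 = 0) (C : ℝ) (hC : 0 ≤ C)
    (m : ℕ) (hb : ∀ y ∈ Icc (0:ℝ) 1, |deriv f y| ≤ C * (1-y)^m) :
    ∀ x ∈ Icc (0:ℝ) 1, |f x| ≤ C * (1-x)^(m+1) := by
  intro x hx
  have key := norm_image_sub_le_of_norm_deriv_le_segment' (a := x) (b := 1)
      (f := f) (f' := deriv f) (C := C*(1-x)^m)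
      (fun y _ => (hf y).hasDerivAt.hasDerivWithinAt) ?_ 1 (right_mem_Icc.mpr hx.2)
  · rw [h1, zero_sub, norm_neg, Real.norm_eq_abs] at key
    calc |f x| ≤ C*(1-x)^m * (1-x) := key
      _ = C * (1-x)^(m+1) := by ring
  · intro y hy
    calc ‖deriv f y‖ ≤ C*(1-y)^m := hb y ⟨le_trans hx.1 hy.1, hy.2.le⟩
      _ ≤ C*(1-x)^m := by
          apply mul_le_mul_of_nonneg_left _ hC
          exact pow_le_pow_left₀ (by linarith [hy.2.le]) (by linarith [hy.1]) m

lemma decay_all (f : ℝ → ℝ) (hf : ContDiff ℝ (⊤ : ℕ∞) f) (m : ℕ)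
    (hvan : ∀ k, k < m → iteratedDeriv k f 1 = 0) :
    ∀ j, j ≤ m → ∃ C, 0 ≤ C ∧ ∀ x ∈ Icc (0:ℝ) 1, |iteratedDeriv (m-j) f x| ≤ C * (1-x)^j := by
  have hcont : ∀ i, Continuous (iteratedDeriv i f) := fun i =>
    (hf.differentiable_iteratedDeriv i (natlt _)).continuous
  intro j
  induction j with
  | zero =>
    intro _
    obtain ⟨C, hC⟩ := isCompact_Icc.exists_bound_of_continuousOn
      ((hcont (m-0)).continuousOn (s := Icc (0:ℝ) 1))
    refine ⟨max C 0, le_max_right _ _, fun x hx => ?_⟩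
    rw [pow_zero, mul_one]
    exact le_trans (hC x hx) (le_max_left _ _)
  | succ j ih =>
    intro hj
    obtain ⟨C, hC0, hC⟩ := ih (by omega)
    refine ⟨C, hC0, ?_⟩
    have hidx : m - (j+1) + 1 = m - j := by omega
    have hder : deriv (iteratedDeriv (m-(j+1)) f) = iteratedDeriv (m-j) f := by
      rw [← hidx, ← iteratedDeriv_succ]
    apply decay_step _ (hf.differentiable_iteratedDeriv (m-(j+1)) (natlt _))
      (hvan _ (by omega)) C hC0 j
    intro y hy
    rw [hder]
    exact hC y hy

lemma decay_final (p : ℕ) (hp : 1 ≤ p) (f : ℝ → ℝ) (hf : ContDiff ℝ (⊤ : ℕ∞) f)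
    (hvan : ∀ k, k < p → iteratedDeriv k f 1 = 0) :
    ∃ C, 0 ≤ C ∧ ∀ x ∈ Icc (0:ℝ) 1,
      |f x| ≤ C * (1-x)^p ∧ |deriv f x| ≤ C * (1-x)^(p-1) := by
  obtain ⟨C1, hC10, hC1⟩ := decay_all f hf p hvan p le_rfl
  obtain ⟨C2, hC20, hC2⟩ := decay_all f hf p hvan (p-1) (by omega)
  refine ⟨max C1 C2, le_trans hC10 (le_max_left _ _), fun x hx => ⟨?_, ?_⟩⟩
  · have := hC1 x hx
    rw [Nat.sub_self, iteratedDeriv_zero] at this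
    exact le_trans this (mul_le_mul_of_nonneg_right (le_max_left _ _)
      (pow_nonneg (by linarith [hx.2]) _))
  · have := hC2 x hx
    rw [show p - (p-1) = 1 by omega, iteratedDeriv_one] at this
    exact le_trans this (mul_le_mul_of_nonneg_right (le_max_right _ _)
      (pow_nonneg (by linarith [hx.2]) _))


lemma wronskian_const (p ν : ℕ) (f g : ℝ → ℝ)
    (hf : ∀ τ ∈ Ioo (-1:ℝ) 1, DifferentiableAt ℝ f τ ∧ DifferentiableAt ℝ (deriv f) τ)
    (hfo : ∀ τ ∈ Ioo (-1:ℝ) 1,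
      (1 - τ ^ 2) * deriv (deriv f) τ + 2 * ((p : ℝ) - 1) * τ * deriv f τ
        + ((ν : ℝ) * ((ν : ℝ) + 1) - (p : ℝ) * ((p : ℝ) - 1)) * f τ = 0)
    (hg : ∀ τ ∈ Ioo (-1:ℝ) 1, DifferentiableAt ℝ g τ ∧ DifferentiableAt ℝ (deriv g) τ)
    (hgo : ∀ τ ∈ Ioo (-1:ℝ) 1,
      (1 - τ ^ 2) * deriv (deriv g) τ + 2 * ((p : ℝ) - 1) * τ * deriv g τ
        + ((ν : ℝ) * ((ν : ℝ) + 1) - (p : ℝ) * ((p : ℝ) - 1)) * g τ = 0) :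
    ∀ σ ∈ Ioo (-1:ℝ) 1, ∀ τ ∈ Ioo (-1:ℝ) 1,
      (1-σ^2)^((1:ℤ)-p) * (deriv f σ * g σ - f σ * deriv g σ)
        = (1-τ^2)^((1:ℤ)-p) * (deriv f τ * g τ - f τ * deriv g τ) := by
  set μ : ℝ := (ν : ℝ) * ((ν : ℝ) + 1) - (p : ℝ) * ((p : ℝ) - 1) with hμ
  set F : ℝ → ℝ := fun τ => (1-τ^2)^((1:ℤ)-p) * (deriv f τ * g τ - f τ * deriv g τ) with hF
  have hFder : ∀ τ ∈ Ioo (-1:ℝ) 1, HasDerivAt F 0 τ := by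
    intro τ hτ
    have ht : (0:ℝ) < 1 - τ^2 := by nlinarith [hτ.1, hτ.2]
    have hne : (1:ℝ) - τ^2 ≠ 0 := ne_of_gt ht
    have hbase : HasDerivAt (fun τ : ℝ => 1 - τ^2) (-(2*τ)) τ := by
      have := (hasDerivAt_pow 2 τ).const_sub 1
      refine this.congr_deriv ?_
      norm_num
    have hz := (hasDerivAt_zpow ((1:ℤ)-p) (1-τ^2) (Or.inl hne)).comp τ hbase
    have hdf : HasDerivAt f (deriv f τ) τ := (hf τ hτ).1.hasDerivAt
    have hdf2 : HasDerivAt (deriv f) (deriv (deriv f) τ) τ := (hf τ hτ).2.hasDerivAt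
    have hdg : HasDerivAt g (deriv g τ) τ := (hg τ hτ).1.hasDerivAt
    have hdg2 : HasDerivAt (deriv g) (deriv (deriv g) τ) τ := (hg τ hτ).2.hasDerivAt
    have hW : HasDerivAt (fun τ => deriv f τ * g τ - f τ * deriv g τ)
        (deriv (deriv f) τ * g τ - f τ * deriv (deriv g) τ) τ := by
      have h1 := hdf2.mul hdg
      have h2 := hdf.mul hdg2
      have := h1.sub h2
      refine this.congr_deriv ?_
      ring
    have htot := hz.mul hW
    refine htot.congr_deriv ?_
    have hf2 : deriv (deriv f) τ = (-(2*((p:ℝ)-1)*τ*deriv f τ) - μ*f τ)/(1-τ^2) := by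
      field_simp
      linear_combination (hfo τ hτ)
    have hg2 : deriv (deriv g) τ = (-(2*((p:ℝ)-1)*τ*deriv g τ) - μ*g τ)/(1-τ^2) := by
      field_simp
      linear_combination (hgo τ hτ)
    have hzz : (1-τ^2)^((1:ℤ)-p) = (1-τ^2)^((1:ℤ)-p-1) * (1-τ^2) := by
      rw [← zpow_add_one₀ hne]
      congr 1
      ring
    simp only [Function.comp_apply, Function.comp] at *
    rw [hf2, hg2, hzz]
    have hzp : (1-τ^2)^((1:ℤ)-p-1) ≠ 0 := zpow_ne_zero _ hne
    push_cast
    field_simp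
    ring
  intro σ hσ τ hτ
  rcases le_total σ τ with h | h
  · have hsub : Icc σ τ ⊆ Ioo (-1:ℝ) 1 := fun x hx => ⟨lt_of_lt_of_le hσ.1 hx.1, lt_of_le_of_lt hx.2 hτ.2⟩
    have := constant_of_has_deriv_right_zero (f := F) (a := σ) (b := τ)
      (fun x hx => ((hFder x (hsub hx)).differentiableAt).continuousAt.continuousWithinAt)
      (fun x hx => (hFder x (hsub (Ico_subset_Icc_self hx))).hasDerivWithinAt)
    exact (this τ (right_mem_Icc.mpr h)).symm
  · have hsub : Icc τ σ ⊆ Ioo (-1:ℝ) 1 := fun x hx => ⟨lt_of_lt_of_le hτ.1 hx.1, lt_of_le_of_lt hx.2 hσ.2⟩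
    have := constant_of_has_deriv_right_zero (f := F) (a := τ) (b := σ)
      (fun x hx => ((hFder x (hsub hx)).differentiableAt).continuousAt.continuousWithinAt)
      (fun x hx => (hFder x (hsub (Ico_subset_Icc_self hx))).hasDerivWithinAt)
    exact this σ (right_mem_Icc.mpr h)


lemma exists_smooth_ext (ε : ℝ) (hε : 0 < ε) (g : ℝ → ℝ)
    (hg : ContDiffOn ℝ (⊤ : ℕ∞) g (Ioo (-1-ε) (1+ε))) :
    ∃ G : ℝ → ℝ, ContDiff ℝ (⊤ : ℕ∞) G ∧ EqOn g G (Ioo (-1:ℝ) 1) := by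
  have hb : (1:ℝ) + ε/2 < 1 + 3*ε/4 := by linarith
  set bump : ContDiffBump (0:ℝ) := ⟨1+ε/2, 1+3*ε/4, by linarith, hb⟩ with hbump
  refine ⟨fun x => bump x * g x, ?_, ?_⟩
  · rw [contDiff_iff_contDiffAt]
    intro x
    by_cases hx : x ∈ Ioo (-1-ε) (1+ε)
    · exact (bump.contDiff.contDiffAt).mul
        ((hg.contDiffAt (isOpen_Ioo.mem_nhds hx)).of_le le_rfl)
    · have hfar : ∀ᶠ y in nhds x, (fun x => bump x * g x) y = (fun _ => (0:ℝ)) y := by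
        have hxa : 1 + 3*ε/4 < |x| := by
          simp only [mem_Ioo, not_and_or, not_lt] at hx
          rcases hx with h | h
          · rw [abs_of_nonpos (by linarith)]; linarith
          · rw [abs_of_nonneg (by linarith)]; linarith
        have hopen : IsOpen {y : ℝ | 1 + 3*ε/4 < |y|} := by
          have : Continuous (fun y : ℝ => |y|) := continuous_abs
          exact isOpen_lt continuous_const this
        filter_upwards [hopen.mem_nhds hxa] with y hy
        have : bump y = 0 := bump.zero_of_le_dist (by
          rw [Real.dist_eq, sub_zero]; exact le_of_lt hy)
        simp [this]
      exact ContDiffAt.congr_of_eventuallyEq contDiffAt_const hfar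
  · intro x hx
    have h1 : bump x = 1 := bump.one_of_mem_closedBall (by
      rw [mem_closedBall, Real.dist_eq, sub_zero]
      have h2 := abs_lt.mpr ⟨hx.1, hx.2⟩
      show |x| ≤ 1 + ε/2
      linarith)
    simp [h1]

lemma const_zero (c D : ℝ) (h : ∀ x ∈ Ico (0:ℝ) 1, |c| ≤ D * (1-x)) : c = 0 := by
  have hD0 : 0 ≤ D := by
    have := h 0 (by norm_num)
    nlinarith [abs_nonneg c]
  by_contra hc
  have hc0 : 0 < |c| := abs_pos.mpr hc
  set x : ℝ := max 0 (1 - |c|/(2*(D+1))) with hx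
  have hq : 0 < |c|/(2*(D+1)) := by positivity
  have hx0 : 0 ≤ x := le_max_left _ _
  have hx1 : x < 1 := by
    apply max_lt one_pos
    linarith
  have h1x : 1 - x ≤ |c|/(2*(D+1)) := by
    have : 1 - |c|/(2*(D+1)) ≤ x := le_max_right _ _
    linarith
  have := h x ⟨hx0, hx1⟩
  have h2 : D * (1-x) ≤ D * (|c|/(2*(D+1))) :=
    mul_le_mul_of_nonneg_left h1x hD0
  have h3 : D * (|c|/(2*(D+1))) < |c| := by
    rw [mul_div_assoc']
    rw [div_lt_iff₀ (by positivity : (0:ℝ) < 2*(D+1))]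
    nlinarith
  linarith


lemma smooth_pair {f : ℝ → ℝ} (h : ContDiff ℝ (⊤:ℕ∞) f) (τ : ℝ) :
    DifferentiableAt ℝ f τ ∧ DifferentiableAt ℝ (deriv f) τ := by
  constructor
  · have h0 := (hD_hasDeriv h 0 τ).differentiableAt
    rwa [iteratedDeriv_zero] at h0
  · have h1 := (hD_hasDeriv h 1 τ).differentiableAt
    rwa [iteratedDeriv_one] at h1

lemma forward_W_zero (p ν : ℕ) (hνp : p ≤ ν) (a : ℝ → ℝ)
    (hdiff : ∀ τ ∈ Ioo (-1:ℝ) 1, DifferentiableAt ℝ a τ ∧ DifferentiableAt ℝ (deriv a) τ)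
    (hode : ∀ τ ∈ Ioo (-1:ℝ) 1,
      (1 - τ ^ 2) * deriv (deriv a) τ + 2 * ((p : ℝ) - 1) * τ * deriv a τ
        + ((ν : ℝ) * ((ν : ℝ) + 1) - (p : ℝ) * ((p : ℝ) - 1)) * a τ = 0)
    (ε : ℝ) (hε : 0 < ε) (g : ℝ → ℝ)
    (hg : ContDiffOn ℝ (⊤ : ℕ∞) g (Ioo (-1-ε) (1+ε)))
    (hEq : EqOn a g (Ioo (-1:ℝ) 1)) :
    deriv a 0 * Pf p ν 0 - a 0 * deriv (Pf p ν) 0 = 0 := by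
  obtain ⟨G, hGsm, hgG⟩ := exists_smooth_ext ε hε g hg
  have haG : EqOn a G (Ioo (-1:ℝ) 1) := fun x hx => (hEq hx).trans (hgG hx)
  have hderiv_eq : ∀ τ ∈ Ioo (-1:ℝ) 1, deriv a τ = deriv G τ := fun τ hτ =>
    Filter.EventuallyEq.deriv_eq
      (Filter.eventually_of_mem (Ioo_mem_nhds hτ.1 hτ.2) haG)
  have hderiv2_eq : ∀ τ ∈ Ioo (-1:ℝ) 1, deriv (deriv a) τ = deriv (deriv G) τ := fun τ hτ =>
    Filter.EventuallyEq.deriv_eq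
      (Filter.eventually_of_mem (Ioo_mem_nhds hτ.1 hτ.2) (fun x hx => hderiv_eq x hx))
  have hodeG : ∀ τ ∈ Ioo (-1:ℝ) 1,
      (1 - τ ^ 2) * deriv (deriv G) τ + 2 * ((p : ℝ) - 1) * τ * deriv G τ
        + ((ν : ℝ) * ((ν : ℝ) + 1) - (p : ℝ) * ((p : ℝ) - 1)) * G τ = 0 := by
    intro τ hτ
    rw [← haG hτ, ← hderiv_eq τ hτ, ← hderiv2_eq τ hτ]
    exact hode τ hτ
  have hPsm : ContDiff ℝ (⊤:ℕ∞) (Pf p ν) := (Pf_contDiff p ν).of_le le_top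
  have hPdiff : ∀ τ ∈ Ioo (-1:ℝ) 1,
      DifferentiableAt ℝ (Pf p ν) τ ∧ DifferentiableAt ℝ (deriv (Pf p ν)) τ :=
    fun τ _ => smooth_pair hPsm τ
  have hPode : ∀ τ ∈ Ioo (-1:ℝ) 1,
      (1 - τ ^ 2) * deriv (deriv (Pf p ν)) τ + 2 * ((p : ℝ) - 1) * τ * deriv (Pf p ν) τ
        + ((ν : ℝ) * ((ν : ℝ) + 1) - (p : ℝ) * ((p : ℝ) - 1)) * Pf p ν τ = 0 := by
    intro τ _
    have := Pf_ode p ν τ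
    linear_combination this
  have h0Ioo : (0:ℝ) ∈ Ioo (-1:ℝ) 1 := by norm_num
  have hW := wronskian_const p ν a (Pf p ν) hdiff hode hPdiff hPode 0 h0Ioo
  set W : ℝ → ℝ := fun x => deriv G x * Pf p ν x - G x * deriv (Pf p ν) x with hWdef
  have hWeq : ∀ x ∈ Ioo (-1:ℝ) 1,
      deriv a x * Pf p ν x - a x * deriv (Pf p ν) x = W x := by
    intro x hx
    rw [hWdef]
    simp only
    rw [haG hx, hderiv_eq x hx]
  obtain ⟨D, hD0, hbound⟩ : ∃ D, 0 ≤ D ∧ ∀ x ∈ Ico (0:ℝ) 1,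
      |(1-x^2)^((1:ℤ)-p) * W x| ≤ D * (1-x) := by
    rcases Nat.eq_zero_or_pos p with hp0 | hp1
    · subst hp0
      have hWcont : Continuous W := by
        have h1 : Continuous (deriv G) :=
          continuous_iff_continuousAt.mpr fun x => ((smooth_pair hGsm x).2).continuousAt
        have h2 : Continuous (deriv (Pf 0 ν)) :=
          continuous_iff_continuousAt.mpr fun x => ((smooth_pair hPsm x).2).continuousAt
        have h3 : Continuous G := hGsm.continuous
        have h4 : Continuous (Pf 0 ν) := hPsm.continuous
        fun_prop
      obtain ⟨M, hM⟩ := isCompact_Icc.exists_bound_of_continuousOn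
        (hWcont.continuousOn (s := Icc (0:ℝ) 1))
      refine ⟨2 * max M 0, by positivity, ?_⟩
      intro x hx
      have hx1 : (0:ℝ) ≤ 1 - x := by linarith [hx.2.le]
      have hx2 : (0:ℝ) ≤ 1 + x := by linarith [hx.1]
      rw [abs_mul]
      have hcast : ((1:ℤ) - ((0:ℕ):ℤ)) = 1 := by norm_num
      rw [show ((0:ℕ):ℤ) = (0:ℤ) from rfl] at hcast ⊢
      rw [hcast, zpow_one]
      have hWx : |W x| ≤ max M 0 := le_trans (hM x ⟨hx.1, hx.2.le⟩) (le_max_left _ _)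
      have habs : |1 - x^2| ≤ 2*(1-x) := by
        rw [abs_of_nonneg (by nlinarith)]
        nlinarith
      calc |1-x^2| * |W x| ≤ (2*(1-x)) * max M 0 :=
            mul_le_mul habs hWx (abs_nonneg _) (by linarith)
        _ = 2 * max M 0 * (1-x) := by ring
    · have hvanG := boundary_vanish hGsm hp1 hνp hodeG
      have hvanP := boundary_vanish hPsm hp1 hνp hPode
      obtain ⟨CG, hCG0, hCG⟩ := decay_final p hp1 G hGsm hvanG
      obtain ⟨CP, hCP0, hCP⟩ := decay_final p hp1 (Pf p ν) hPsm hvanP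
      refine ⟨2*CG*CP, by positivity, ?_⟩
      intro x hx
      have hx1 : (0:ℝ) ≤ 1 - x := by linarith [hx.2.le]
      have hx1' : 1 - x ≤ 1 := by linarith [hx.1]
      have hx2 : (0:ℝ) < 1 - x := by linarith [hx.2]
      have h1x : (0:ℝ) < 1 + x := by linarith [hx.1]
      have hxx : (0:ℝ) < 1 - x^2 := by nlinarith
      obtain ⟨hG1, hG2⟩ := hCG x ⟨hx.1, hx.2.le⟩
      obtain ⟨hP1, hP2⟩ := hCP x ⟨hx.1, hx.2.le⟩
      have hWb : |W x| ≤ 2*(CG*CP) * (1-x)^(p + (p-1)) := by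
        rw [hWdef]
        simp only
        calc |deriv G x * Pf p ν x - G x * deriv (Pf p ν) x|
            ≤ |deriv G x * Pf p ν x| + |G x * deriv (Pf p ν) x| := abs_sub _ _
          _ = |deriv G x| * |Pf p ν x| + |G x| * |deriv (Pf p ν) x| := by
              rw [abs_mul, abs_mul]
          _ ≤ (CG*(1-x)^(p-1)) * (CP*(1-x)^p) + (CG*(1-x)^p) * (CP*(1-x)^(p-1)) := by
              apply add_le_add
              · exact mul_le_mul hG2 hP1 (abs_nonneg _) (by positivity)
              · exact mul_le_mul hG1 hP2 (abs_nonneg _) (by positivity)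
          _ = 2*(CG*CP) * ((1-x)^(p-1) * (1-x)^p) := by ring
          _ = 2*(CG*CP) * (1-x)^(p + (p-1)) := by rw [← pow_add]; ring_nf
      have hkey : |(1-x^2)^((1:ℤ)-p)| * (1-x)^(p+(p-1)) ≤ (1-x) := by
        rw [abs_of_pos (zpow_pos hxx _)]
        have hfact : (1-x^2) = (1-x)*(1+x) := by ring
        rw [hfact, mul_zpow]
        have hle1 : (1+x)^((1:ℤ)-p) ≤ 1 :=
          zpow_le_one_of_nonpos₀ (by linarith) (by
            have : (1:ℤ) ≤ (p:ℤ) := by exact_mod_cast hp1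
            omega)
        have hstep : (1-x)^((1:ℤ)-p) * (1+x)^((1:ℤ)-p) * (1-x)^(p+(p-1))
            ≤ (1-x)^((1:ℤ)-p) * 1 * (1-x)^(p+(p-1)) := by
          apply mul_le_mul_of_nonneg_right _ (by positivity)
          exact mul_le_mul_of_nonneg_left hle1 (le_of_lt (zpow_pos hx2 _))
        apply le_trans hstep
        have hexp : (1-x)^((1:ℤ)-p) * 1 * (1-x)^(p+(p-1)) = (1-x)^(p:ℕ) := by
          rw [mul_one, ← zpow_natCast (1-x) (p+(p-1)), ← zpow_add₀ (ne_of_gt hx2)]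
          rw [← zpow_natCast (1-x) p]
          congr 1
          have : ((p + (p-1) : ℕ) : ℤ) = 2*(p:ℤ) - 1 := by
            have h1 : (1:ℕ) ≤ p := hp1
            push_cast [Nat.cast_sub h1]
            ring
          rw [this]
          ring
        rw [hexp]
        calc (1-x)^(p:ℕ) ≤ (1-x)^(1:ℕ) := pow_le_pow_of_le_one hx1 hx1' hp1
          _ = 1-x := pow_one _
      calc |(1-x^2)^((1:ℤ)-p) * W x| = |(1-x^2)^((1:ℤ)-p)| * |W x| := abs_mul _ _
        _ ≤ |(1-x^2)^((1:ℤ)-p)| * (2*(CG*CP)*(1-x)^(p+(p-1))) :=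
            mul_le_mul_of_nonneg_left hWb (abs_nonneg _)
        _ = 2*(CG*CP) * (|(1-x^2)^((1:ℤ)-p)| * (1-x)^(p+(p-1))) := by ring
        _ ≤ 2*(CG*CP) * (1-x) := mul_le_mul_of_nonneg_left hkey (by positivity)
        _ = 2*CG*CP * (1-x) := by ring
  apply const_zero _ D
  intro x hx
  have hxIoo : x ∈ Ioo (-1:ℝ) 1 := ⟨by linarith [hx.1], hx.2⟩
  have h1 := hW x hxIoo
  rw [hWeq x hxIoo] at h1
  have h2 : ((1:ℝ)-(0:ℝ)^2)^((1:ℤ)-p) = 1 := by norm_num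
  rw [h2, one_mul] at h1
  rw [h1]
  exact hbound x hx

end Stmt6

open Set in
/-- for `ν ≥ p`, a solution of the master ODE extends smoothly past
`τ = ±1` iff the initial data at `τ = 0` satisfy `a(0) = 0` when `ν + p` is odd and
`a'(0) = 0` when `ν + p` is even. -/
theorem stmt_6 (p ν : ℕ) (hνp : p ≤ ν) (a : ℝ → ℝ)
    (hdiff : ∀ τ ∈ Set.Ioo (-1 : ℝ) 1,
      DifferentiableAt ℝ a τ ∧ DifferentiableAt ℝ (deriv a) τ)
    (hode : ∀ τ ∈ Set.Ioo (-1 : ℝ) 1,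
      (1 - τ ^ 2) * deriv (deriv a) τ + 2 * ((p : ℝ) - 1) * τ * deriv a τ
        + ((ν : ℝ) * ((ν : ℝ) + 1) - (p : ℝ) * ((p : ℝ) - 1)) * a τ = 0) :
    (∃ ε > (0 : ℝ), ∃ g : ℝ → ℝ,
        ContDiffOn ℝ (⊤ : ℕ∞) g (Set.Ioo (-1 - ε) (1 + ε)) ∧
        Set.EqOn a g (Set.Ioo (-1 : ℝ) 1))
    ↔ ((Odd (ν + p) → a 0 = 0) ∧ (Even (ν + p) → deriv a 0 = 0)) := by
  constructor
  · rintro ⟨ε, hε, g, hg, hEq⟩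
    have hW0 := Stmt6.forward_W_zero p ν hνp a hdiff hode ε hε g hg hEq
    rw [Stmt6.Pf_zero, Stmt6.deriv_Pf_zero] at hW0
    constructor
    · intro hodd
      have h1 : (ν + p) % 2 = 1 := Nat.odd_iff.mp hodd
      simp [Stmt6.bc, h1] at hW0
      linarith
    · intro heven
      have h1 : (ν + p) % 2 = 0 := Nat.even_iff.mp heven
      simp [Stmt6.bc, h1] at hW0
      linarith
  · rintro ⟨h1, h2⟩
    have hPsm : ContDiff ℝ (⊤:ℕ∞) (Stmt6.Pf p ν) := (Stmt6.Pf_contDiff p ν).of_le le_top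
    set c : ℝ := if (ν + p) % 2 = 0 then a 0 else deriv a 0 with hc
    set gf : ℝ → ℝ := fun τ => c * Stmt6.Pf p ν τ with hgf
    have hdg : deriv gf = fun τ => c * deriv (Stmt6.Pf p ν) τ := deriv_const_mul_field' c
    have hgdiff : ∀ τ ∈ Ioo (-1:ℝ) 1,
        DifferentiableAt ℝ gf τ ∧ DifferentiableAt ℝ (deriv gf) τ := by
      intro τ _
      constructor
      · exact ((Stmt6.smooth_pair hPsm τ).1).const_mul c
      · rw [hdg]
        exact ((Stmt6.smooth_pair hPsm τ).2).const_mul c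
    have hgode : ∀ τ ∈ Ioo (-1:ℝ) 1,
        (1 - τ ^ 2) * deriv (deriv gf) τ + 2 * ((p : ℝ) - 1) * τ * deriv gf τ
          + ((ν : ℝ) * ((ν : ℝ) + 1) - (p : ℝ) * ((p : ℝ) - 1)) * gf τ = 0 := by
      intro τ _
      rw [hdg, deriv_const_mul_field', hgf]
      simp only
      linear_combination c * (Stmt6.Pf_ode p ν τ)
    have hmatch : a 0 = gf 0 ∧ deriv a 0 = deriv gf 0 := by
      rw [hdg, hgf]
      simp only
      rw [Stmt6.Pf_zero, Stmt6.deriv_Pf_zero]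
      rcases Nat.even_or_odd (ν + p) with he | ho
      · have h0 : (ν + p) % 2 = 0 := Nat.even_iff.mp he
        rw [hc]
        simp [Stmt6.bc, h0, h2 he]
      · have h0 : (ν + p) % 2 = 1 := Nat.odd_iff.mp ho
        rw [hc]
        simp [Stmt6.bc, h0, h1 ho]
    have hEqON := Stmt6.ode_unique p ν a gf hdiff hode hgdiff hgode hmatch.1 hmatch.2
    refine ⟨1, one_pos, gf, ?_, hEqON⟩
    have hA : AnalyticOnNhd ℝ gf (Ioo (-1-(1:ℝ)) (1+1)) := by
      intro x _
      exact analyticAt_const.mul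
        ((AnalyticOnNhd.eval_polynomial (𝕜 := ℝ) (Stmt6.Qpoly p ν)) x (mem_univ x))
    exact hA.contDiffOn isOpen_Ioo.uniqueDiffOn
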